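/- arXiv:1905.03456 — 3 statements merged into one kernel-verified Lean document; each statement's English description precedes it below -/
import Mathlib

section
/- If A = {2^1, 2^2, ..., 2^N} for N ≥ 1 and f(x,y) = xy + x^2y^2, then f(A,A) has exactly 2N-1 elements. -/
theorem stmt_2 (N : ℕ) (hN : 1 ≤ N)
    (A : Finset ℝ) (hA : A = (Finset.Icc 1 N).image (fun n : ℕ => (2 : ℝ) ^ n))
    (f : ℝ → ℝ → ℝ) (hf : ∀ x y, f x y = x * y + x ^ 2 * y ^ 2) :
    ((A ×ˢ A).image (fun p : ℝ × ℝ => f p.1 p.2)).card = 2 * N - 1 := by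
  subst hA
  have hg : StrictMono (fun s : ℕ => (2:ℝ)^s + (2:ℝ)^(2*s)) := by
    intro a b hab
    have h1 : (2:ℝ)^a < 2^b := by
      exact pow_lt_pow_right₀ one_lt_two hab
    have h2 : (2:ℝ)^(2*a) < 2^(2*b) := by
      exact pow_lt_pow_right₀ one_lt_two (by omega)
    exact add_lt_add h1 h2
  have key : (((Finset.Icc 1 N).image (fun n : ℕ => (2 : ℝ) ^ n) ×ˢ
      (Finset.Icc 1 N).image (fun n : ℕ => (2 : ℝ) ^ n)).image
      (fun p : ℝ × ℝ => f p.1 p.2)) =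
      (Finset.Icc 2 (2*N)).image (fun s : ℕ => (2:ℝ)^s + (2:ℝ)^(2*s)) := by
    ext x
    simp only [Finset.mem_image, Finset.mem_product, Finset.mem_Icc, Prod.exists]
    constructor
    · rintro ⟨a, b, ⟨⟨i, hi, rfl⟩, ⟨j, hj, rfl⟩⟩, rfl⟩
      refine ⟨i + j, ⟨by omega, by omega⟩, ?_⟩
      rw [hf]
      rw [← pow_add, ← mul_pow, ← pow_add]
      ring_nf
    · rintro ⟨s, ⟨hs1, hs2⟩, rfl⟩
      by_cases h : s ≤ N + 1
      · refine ⟨2^1, 2^(s-1), ⟨⟨1, ⟨by omega, rfl⟩⟩, ⟨s-1, ⟨by omega, rfl⟩⟩⟩, ?_⟩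
        rw [hf, ← pow_add, ← mul_pow, ← pow_add]
        have : 1 + (s - 1) = s := by omega
        rw [this, ← pow_mul]
        ring_nf
      · refine ⟨2^(s-N), 2^N, ⟨⟨s-N, ⟨by omega, rfl⟩⟩, ⟨N, ⟨by omega, rfl⟩⟩⟩, ?_⟩
        rw [hf, ← pow_add, ← mul_pow, ← pow_add]
        have : s - N + N = s := by omega
        rw [this, ← pow_mul]
        ring_nf
  rw [key, Finset.card_image_of_injective _ hg.injective, Nat.card_Icc]
  omega
end

section
/- Let g_1, ..., g_r be real numbers and d ≥ 1 an integer. Suppose all products g_1^{μ_1}···g_r^{μ_r} with μ_k ∈ {0,...,dH_k - 1} are pairwise distinct (for some positive integers H_k). Let i, j, i', j' ∈ ℕ with i+j ≤ d, i'+j' ≤ d, and i·j' ≠ i'·j. Then for any fixed target values z, z', there is at most one pair (x,y) with x = ∏ g_k^{x_k}, y = ∏ g_k^{y_k}, x_k, y_k ∈ {0,...,H_k - 1}, such that x^i y^j = z and x^{i'} y^{j'} = z'. -/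
open Finset in
theorem stmt_8 (r d : ℕ) (hd : 1 ≤ d) (g : Fin r → ℝ) (H : Fin r → ℕ)
    (hH : ∀ k, 1 ≤ H k)
    (hdist : ∀ μ ν : Fin r → ℕ, (∀ k, μ k < d * H k) → (∀ k, ν k < d * H k) →
      ∏ k, g k ^ μ k = ∏ k, g k ^ ν k → μ = ν)
    (i j i' j' : ℕ) (hij : i + j ≤ d) (hij' : i' + j' ≤ d) (hdet : i * j' ≠ i' * j)
    (z z' : ℝ)
    (a b a' b' : Fin r → ℕ)
    (ha : ∀ k, a k < H k) (hb : ∀ k, b k < H k) (ha' : ∀ k, a' k < H k) (hb' : ∀ k, b' k < H k)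
    (x y x' y' : ℝ)
    (hx : x = ∏ k, g k ^ a k) (hy : y = ∏ k, g k ^ b k)
    (hx' : x' = ∏ k, g k ^ a' k) (hy' : y' = ∏ k, g k ^ b' k)
    (h1 : x ^ i * y ^ j = z) (h2 : x ^ i' * y ^ j' = z')
    (h1' : x' ^ i * y' ^ j = z) (h2' : x' ^ i' * y' ^ j' = z') :
    x = x' ∧ y = y' := by
  have key : ∀ (p q : ℕ) (u v : Fin r → ℕ),
      (∏ k, g k ^ u k) ^ p * (∏ k, g k ^ v k) ^ q = ∏ k, g k ^ (p * u k + q * v k) := by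
    intro p q u v
    rw [← Finset.prod_pow, ← Finset.prod_pow, ← Finset.prod_mul_distrib]
    refine Finset.prod_congr rfl fun k _ => ?_
    rw [pow_add, ← pow_mul, ← pow_mul, mul_comm (u k) p, mul_comm (v k) q]
  have hbound : ∀ (p q : ℕ) (u v : Fin r → ℕ), p + q ≤ d → (∀ k, u k < H k) →
      (∀ k, v k < H k) → ∀ k, p * u k + q * v k < d * H k := by
    intro p q u v hpq hu hv k
    have h1 := hu k; have h2 := hv k; have h3 := hH k
    nlinarith
  have e1 : (fun k => i * a k + j * b k) = (fun k => i * a' k + j * b' k) := by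
    apply hdist _ _ (hbound i j a b hij ha hb) (hbound i j a' b' hij ha' hb')
    rw [← key, ← key, ← hx, ← hy, ← hx', ← hy', h1, h1']
  have e2 : (fun k => i' * a k + j' * b k) = (fun k => i' * a' k + j' * b' k) := by
    apply hdist _ _ (hbound i' j' a b hij' ha hb) (hbound i' j' a' b' hij' ha' hb')
    rw [← key, ← key, ← hx, ← hy, ← hx', ← hy', h2, h2']
  have hdetZ : (i : ℤ) * j' - i' * j ≠ 0 := by
    intro h
    apply hdet
    have : (i : ℤ) * j' = i' * j := by linarith
    exact_mod_cast this
  have hab : ∀ k, a k = a' k ∧ b k = b' k := by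
    intro k
    have c1 : (i : ℤ) * a k + j * b k = i * a' k + j * b' k := by
      exact_mod_cast congrFun e1 k
    have c2 : (i' : ℤ) * a k + j' * b k = i' * a' k + j' * b' k := by
      exact_mod_cast congrFun e2 k
    have da : ((i : ℤ) * j' - i' * j) * ((a k : ℤ) - a' k) = 0 := by ring_nf; linear_combination (j' : ℤ) * c1 - (j : ℤ) * c2
    have db : ((i : ℤ) * j' - i' * j) * ((b k : ℤ) - b' k) = 0 := by ring_nf; linear_combination (i : ℤ) * c2 - (i' : ℤ) * c1
    constructor
    · have := (mul_eq_zero.mp da).resolve_left hdetZ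
      have : (a k : ℤ) = a' k := by linarith
      exact_mod_cast this
    · have := (mul_eq_zero.mp db).resolve_left hdetZ
      have : (b k : ℤ) = b' k := by linarith
      exact_mod_cast this
  have haa : a = a' := funext fun k => (hab k).1
  have hbb : b = b' := funext fun k => (hab k).2
  subst hx hy hx' hy' haa hbb
  exact ⟨rfl, rfl⟩
end

section
/- Let A ⊂ ℝ be finite with A ⊂ {∏_{k=1}^r g_k^{μ_k} : μ_k ∈ {0,...,H_k-1}} where all products in the d-fold dilate G^{(d)} = {∏ g_k^{μ_k} : μ_k ∈ {0,...,dH_k-1}} are pairwise distinct. Let f(x,y) = Σ_{(i,j)∈S} a_{ij} x^i y^j ∈ ℝ[x,y] of total degree ≤ d contain two monomials with exponent vectors not proportional over ℚ. Suppose Γ is the multiplicative group generated by g_1,...,g_r, and suppose the number of solutions (z_{ij}) ∈ Γ^S to Σ a_{ij} z_{ij} = α with no vanishing subsum is at most C. Then for every α ≠ 0, the number of pairs (x,y) ∈ A × A with f(x,y) = α and no vanishing subsum among the terms a_{ij} x^i y^j is at most C. -/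
lemma aux_bound (i j m n h d : ℕ) (hm : m < h) (hn : n < h) (hij : i + j ≤ d)
    (hd : 1 ≤ d) (hh : 1 ≤ h) : i * m + j * n < d * h := by
  rcases Nat.eq_zero_or_pos (i + j) with h0 | h0
  · have hi : i = 0 := by omega
    have hj : j = 0 := by omega
    simpa [hi, hj] using Nat.mul_pos hd hh
  · have f1 : i * (m + 1) ≤ i * h := Nat.mul_le_mul_left i hm
    have f2 : j * (n + 1) ≤ j * h := Nat.mul_le_mul_left j hn
    have f3 : (i + j) * h ≤ d * h := Nat.mul_le_mul_right h hij
    nlinarith [f1, f2, f3, h0]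

lemma aux_lin (i j p q b c b' c' : ℤ) (h1 : i * b + j * c = i * b' + j * c')
    (h2 : p * b + q * c = p * b' + q * c') (h : i * q ≠ p * j) :
    b = b' ∧ c = c' := by
  have hD : (i * q - p * j) * (b - b') = 0 := by linear_combination q * h1 - j * h2
  have hE : (i * q - p * j) * (c - c') = 0 := by linear_combination i * h2 - p * h1
  have hne : i * q - p * j ≠ 0 := sub_ne_zero.mpr h
  constructor
  · have := mul_eq_zero.mp hD
    rcases this with h' | h'
    · exact absurd h' hne
    · linarith [sub_eq_zero.mp h']
  · have := mul_eq_zero.mp hE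
    rcases this with h' | h'
    · exact absurd h' hne
    · linarith [sub_eq_zero.mp h']

open Finset in
theorem stmt_16 (r d : ℕ) (hd : 1 ≤ d) (g : Fin r → ℝ) (hg : ∀ k, g k ≠ 0)
    (H : Fin r → ℕ) (hH : ∀ k, 1 ≤ H k)
    (A : Finset ℝ)
    (hAG : ∀ x ∈ A, ∃ μ : Fin r → ℕ, (∀ k, μ k < H k) ∧ x = ∏ k, g k ^ μ k)
    (hdist : ∀ μ ν : Fin r → ℕ, (∀ k, μ k < d * H k) → (∀ k, ν k < d * H k) →
      ∏ k, g k ^ μ k = ∏ k, g k ^ ν k → μ = ν)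
    (S : Finset (ℕ × ℕ)) (a : ℕ × ℕ → ℝ) (haS : ∀ v ∈ S, a v ≠ 0)
    (hdeg : ∀ v ∈ S, v.1 + v.2 ≤ d)
    (hnonprop : ∃ v ∈ S, ∃ w ∈ S, v.1 * w.2 ≠ w.1 * v.2)
    (C : ℕ) (α : ℝ) (hα : α ≠ 0)
    (hunit :
      {z : ℕ × ℕ → ℝ |
          (∀ v ∈ S, ∃ μ : Fin r → ℤ, z v = ∏ k, g k ^ μ k) ∧
          (∀ v ∉ S, z v = 0) ∧
          ∑ v ∈ S, a v * z v = α ∧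
          ∀ T ⊆ S, T.Nonempty → T ≠ S → ∑ v ∈ T, a v * z v ≠ 0}.Finite ∧
      {z : ℕ × ℕ → ℝ |
          (∀ v ∈ S, ∃ μ : Fin r → ℤ, z v = ∏ k, g k ^ μ k) ∧
          (∀ v ∉ S, z v = 0) ∧
          ∑ v ∈ S, a v * z v = α ∧
          ∀ T ⊆ S, T.Nonempty → T ≠ S → ∑ v ∈ T, a v * z v ≠ 0}.ncard ≤ C) :
    {p : ℝ × ℝ | p.1 ∈ A ∧ p.2 ∈ A ∧
        ∑ v ∈ S, a v * p.1 ^ v.1 * p.2 ^ v.2 = α ∧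
        ∀ T ⊆ S, T.Nonempty → T ≠ S →
          ∑ v ∈ T, a v * p.1 ^ v.1 * p.2 ^ v.2 ≠ 0}.Finite ∧
    {p : ℝ × ℝ | p.1 ∈ A ∧ p.2 ∈ A ∧
        ∑ v ∈ S, a v * p.1 ^ v.1 * p.2 ^ v.2 = α ∧
        ∀ T ⊆ S, T.Nonempty → T ≠ S →
          ∑ v ∈ T, a v * p.1 ^ v.1 * p.2 ^ v.2 ≠ 0}.ncard ≤ C := by
  set P : Set (ℝ × ℝ) := {p : ℝ × ℝ | p.1 ∈ A ∧ p.2 ∈ A ∧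
        ∑ v ∈ S, a v * p.1 ^ v.1 * p.2 ^ v.2 = α ∧
        ∀ T ⊆ S, T.Nonempty → T ≠ S →
          ∑ v ∈ T, a v * p.1 ^ v.1 * p.2 ^ v.2 ≠ 0} with hP
  set Z : Set (ℕ × ℕ → ℝ) := {z : ℕ × ℕ → ℝ |
          (∀ v ∈ S, ∃ μ : Fin r → ℤ, z v = ∏ k, g k ^ μ k) ∧
          (∀ v ∉ S, z v = 0) ∧
          ∑ v ∈ S, a v * z v = α ∧
          ∀ T ⊆ S, T.Nonempty → T ≠ S → ∑ v ∈ T, a v * z v ≠ 0} with hZ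
  have hPfin : P.Finite := by
    apply (A ×ˢ A).finite_toSet.subset
    intro p hp
    simp only [Finset.coe_product, Set.mem_prod]
    exact ⟨hp.1, hp.2.1⟩
  refine ⟨hPfin, ?_⟩
  set φ : ℝ × ℝ → (ℕ × ℕ → ℝ) :=
    fun p v => if v ∈ S then p.1 ^ v.1 * p.2 ^ v.2 else 0 with hφ
  -- key: the exponent bound
  have key : ∀ (μ ν : Fin r → ℕ) (i j : ℕ),
      (∏ k, g k ^ μ k) ^ i * (∏ k, g k ^ ν k) ^ j = ∏ k, g k ^ (i * μ k + j * ν k) := by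
    intro μ ν i j
    rw [← Finset.prod_pow, ← Finset.prod_pow, ← Finset.prod_mul_distrib]
    apply Finset.prod_congr rfl
    intro k _
    rw [← pow_mul, ← pow_mul, ← pow_add, mul_comm (μ k), mul_comm (ν k)]
  -- image lands in Z
  have himg : φ '' P ⊆ Z := by
    rintro _ ⟨p, hp, rfl⟩
    obtain ⟨hx, hy, hsum, hsub⟩ := hp
    refine ⟨?_, ?_, ?_, ?_⟩
    · intro v hv
      obtain ⟨μ, hμ, hxμ⟩ := hAG p.1 hx
      obtain ⟨ν, hν, hyν⟩ := hAG p.2 hy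
      refine ⟨fun k => (v.1 * μ k + v.2 * ν k : ℕ), ?_⟩
      simp only [hφ, if_pos hv, hxμ, hyν, key μ ν v.1 v.2, zpow_natCast]
    · intro v hv; simp only [hφ, if_neg hv]
    · rw [← hsum]
      apply Finset.sum_congr rfl
      intro v hv
      simp only [hφ, if_pos hv, mul_assoc]
    · intro T hT hT1 hT2
      have heq : ∑ v ∈ T, a v * (fun p v => if v ∈ S then p.1 ^ v.1 * p.2 ^ v.2 else 0) p v
          = ∑ v ∈ T, a v * p.1 ^ v.1 * p.2 ^ v.2 := by
        apply Finset.sum_congr rfl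
        intro v hv
        simp only [if_pos (hT hv), mul_assoc]
      rw [heq]
      exact hsub T hT hT1 hT2
  -- injectivity on P
  have hinj : Set.InjOn φ P := by
    intro p hp p' hp' heq
    obtain ⟨hx, hy, -, -⟩ := hp
    obtain ⟨hx', hy', -, -⟩ := hp'
    obtain ⟨μ, hμ, hxμ⟩ := hAG p.1 hx
    obtain ⟨ν, hν, hyν⟩ := hAG p.2 hy
    obtain ⟨μ', hμ', hxμ'⟩ := hAG p'.1 hx'
    obtain ⟨ν', hν', hyν'⟩ := hAG p'.2 hy'
    have prodeq : ∀ v ∈ S, ∀ k,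
        v.1 * μ k + v.2 * ν k = v.1 * μ' k + v.2 * ν' k := by
      intro v hv
      have e1 : p.1 ^ v.1 * p.2 ^ v.2 = p'.1 ^ v.1 * p'.2 ^ v.2 := by
        have := congrFun heq v
        simpa only [hφ, if_pos hv] using this
      have e2 : (∏ k, g k ^ (v.1 * μ k + v.2 * ν k))
          = ∏ k, g k ^ (v.1 * μ' k + v.2 * ν' k) := by
        rw [← key μ ν v.1 v.2, ← key μ' ν' v.1 v.2, ← hxμ, ← hyν, ← hxμ', ← hyν']
        exact e1
      have hb : ∀ k, v.1 * μ k + v.2 * ν k < d * H k := fun k =>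
        aux_bound _ _ _ _ _ _ (hμ k) (hν k) (hdeg v hv) hd (hH k)
      have hb' : ∀ k, v.1 * μ' k + v.2 * ν' k < d * H k := fun k =>
        aux_bound _ _ _ _ _ _ (hμ' k) (hν' k) (hdeg v hv) hd (hH k)
      have := hdist _ _ hb hb' e2
      exact fun k => congrFun this k
    obtain ⟨v, hv, w, hw, hvw⟩ := hnonprop
    have hμν : ∀ k, μ k = μ' k ∧ ν k = ν' k := by
      intro k
      have h1 := prodeq v hv k
      have h2 := prodeq w hw k
      have hvwZ : (v.1 : ℤ) * w.2 ≠ (w.1 : ℤ) * v.2 := by exact_mod_cast hvw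
      have h1' : (v.1 : ℤ) * μ k + v.2 * ν k = v.1 * μ' k + v.2 * ν' k := by
        exact_mod_cast h1
      have h2' : (w.1 : ℤ) * μ k + w.2 * ν k = w.1 * μ' k + w.2 * ν' k := by
        exact_mod_cast h2
      have := aux_lin _ _ _ _ _ _ _ _ h1' h2' hvwZ
      exact ⟨by exact_mod_cast this.1, by exact_mod_cast this.2⟩
    have hμeq : μ = μ' := funext fun k => (hμν k).1
    have hνeq : ν = ν' := funext fun k => (hμν k).2
    have : p.1 = p'.1 := by rw [hxμ, hxμ', hμeq]
    have : p.2 = p'.2 := by rw [hyν, hyν', hνeq]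
    exact Prod.ext ‹p.1 = p'.1› ‹p.2 = p'.2›
  calc P.ncard = (φ '' P).ncard := (Set.ncard_image_of_injOn hinj).symm
    _ ≤ Z.ncard := Set.ncard_le_ncard himg hunit.1
    _ ≤ C := hunit.2
end
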